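/- arXiv:2006.00039 — 3 statements merged into one kernel-verified Lean document; each statement's English description precedes it below -/
import Mathlib

section
/- There exists a universal constant C > 0 such that for every function ψ in W^{1,1}(ℝ³), the product of the W^{1,1} norm of ψ with the cube root of the supremum over a ∈ ℝ³ of the integral of |ψ| over the unit ball B₁(a) is at least C times the integral of |ψ|^{4/3} over ℝ³. -/
/-!
On a ball `B(a, 1/2)` the function `ψ` agrees with `u = ψ χₐ`, where `χₐ` is a smooth cutoff equal
to `1` on `B(a, 1/2)` and supported in `B(a, 1)`. Hölder's inequality with exponents `n/(n-1)` and
`n` gives `∫ |u|^(1 + 1/n) ≤ ‖u‖_{n/(n-1)} ‖u‖₁^(1/n)`; the Gagliardo–Nirenberg–Sobolev inequality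
bounds `‖u‖_{n/(n-1)}` by `‖∇u‖₁ ≤ ∫_{B(a,1)} (L |ψ| + |∇ψ|)` with `L = sup |∇χₐ|`, and
`‖u‖₁ ≤ sup_a ∫_{B(a,1)} |ψ|`. Integrating this local estimate over all centres `a` (Tonelli) turns
the local integrals into global ones, each weighted by the volume of the ball.
-/

open MeasureTheory Metric ENNReal NNReal Module Set

theorem lintegral_rpow_one_add_inv_le {α : Type*} [MeasurableSpace α] (μ : Measure α)
    {p q : ℝ} (hpq : p.HolderConjugate q) {f : α → ℝ≥0∞} (hf : AEMeasurable f μ) :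
    ∫⁻ x, f x ^ (1 + 1 / q) ∂μ ≤ (∫⁻ x, f x ^ p ∂μ) ^ (1 / p) * (∫⁻ x, f x ∂μ) ^ (1 / q) := by
  have hq : q ≠ 0 := hpq.symm.ne_zero
  calc ∫⁻ x, f x ^ (1 + 1 / q) ∂μ = ∫⁻ x, (f * fun x ↦ f x ^ (1 / q)) x ∂μ := by
        congr with x
        rw [Pi.mul_apply, ENNReal.rpow_add_of_nonneg _ _ zero_le_one (by simpa using hpq.symm.nonneg),
          ENNReal.rpow_one]
    _ ≤ (∫⁻ x, f x ^ p ∂μ) ^ (1 / p) * (∫⁻ x, (f x ^ (1 / q)) ^ q ∂μ) ^ (1 / q) :=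
        lintegral_mul_le_Lp_mul_Lq μ hpq hf (hf.pow_const _)
    _ = _ := by simp_rw [← ENNReal.rpow_mul, one_div_mul_cancel hq, ENNReal.rpow_one]

section RealIntegrals
variable {α : Type*} [MeasurableSpace α] {μ : Measure α}

theorem integral_abs_rpow_eq_toReal_lintegral {f : α → ℝ} (hf : AEStronglyMeasurable f μ)
    {q : ℝ} (hq : 0 ≤ q) : ∫ x, |f x| ^ q ∂μ = (∫⁻ x, ‖f x‖ₑ ^ q ∂μ).toReal := by
  rw [integral_eq_lintegral_of_nonneg_ae (ae_of_all _ fun x ↦ by positivity)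
    (hf.aemeasurable.abs.pow_const q).aestronglyMeasurable]
  congr 1
  refine lintegral_congr fun x ↦ ?_
  rw [Real.enorm_eq_ofReal_abs, ENNReal.ofReal_rpow_of_nonneg (abs_nonneg _) hq]

theorem lintegral_enorm_eq_ofReal_integral_abs {f : α → ℝ} (hf : Integrable f μ) :
    ∫⁻ x, ‖f x‖ₑ ∂μ = ENNReal.ofReal (∫ x, |f x| ∂μ) := by
  simpa [Real.norm_eq_abs] using (ofReal_integral_norm_eq_lintegral_enorm hf).symm

theorem iSup_setLIntegral_enorm_le_ofReal {ι : Type*} {f : α → ℝ} (hf : Integrable f μ)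
    (s : ι → Set α) :
    ⨆ i, ∫⁻ x in s i, ‖f x‖ₑ ∂μ ≤ ENNReal.ofReal (⨆ i, ∫ x in s i, |f x| ∂μ) := by
  have hbdd : BddAbove (Set.range fun i ↦ ∫ x in s i, |f x| ∂μ) :=
    ⟨∫ x, |f x| ∂μ, by
      rintro _ ⟨i, rfl⟩
      exact setIntegral_le_integral hf.abs (ae_of_all _ fun x ↦ abs_nonneg _)⟩
  refine iSup_le fun i ↦ ?_
  rw [lintegral_enorm_eq_ofReal_integral_abs hf.restrict]
  exact ENNReal.ofReal_le_ofReal (le_ciSup hbdd i)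

end RealIntegrals

theorem inv_toReal_add_one_mul_toReal_le {A M : ℝ≥0∞} {X : ℝ} (hM : M ≠ ∞) (hX : 0 ≤ X)
    (h : A ≤ M * ENNReal.ofReal X) : (M.toReal + 1)⁻¹ * A.toReal ≤ X := by
  have hA : A.toReal ≤ M.toReal * X := by
    simpa [ENNReal.toReal_mul, ENNReal.toReal_ofReal hX] using
      ENNReal.toReal_mono (mul_ne_top hM ofReal_ne_top) h
  rw [inv_mul_le_iff₀ (by positivity)]
  nlinarith [ENNReal.toReal_nonneg (a := M)]

section Cutoff
variable {E : Type*} [NormedAddCommGroup E] [NormedSpace ℝ E]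

structure IsCutoff (χ : E → ℝ) (L : ℝ≥0) (s t : Set E) : Prop where
  contDiff : ContDiff ℝ 1 χ
  hasCompactSupport : HasCompactSupport χ
  abs_le_one : ∀ x, |χ x| ≤ 1
  nnnorm_fderiv_le : ∀ x, ‖fderiv ℝ χ x‖₊ ≤ L
  eqOn_one : EqOn χ 1 s
  tsupport_subset : tsupport χ ⊆ t

theorem exists_isCutoff_ball [FiniteDimensional ℝ E] {r R : ℝ} (hr : 0 < r) (hrR : r < R) :
    ∃ L : ℝ≥0, ∀ a : E, ∃ χ : E → ℝ, IsCutoff χ L (ball a r) (ball a R) := by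
  let b : ContDiffBump (0 : E) := ⟨r, (r + R) / 2, hr, by linarith⟩
  have hb : ContDiff ℝ 1 b := b.contDiff
  obtain ⟨L, hL⟩ := (hb.continuous_fderiv one_ne_zero).nnnorm.bddAbove_range_of_hasCompactSupport
    ((b.hasCompactSupport.fderiv ℝ).comp_left nnnorm_zero)
  refine ⟨L, fun a ↦ ⟨fun x ↦ b (x - a), ?_⟩⟩
  have hsupp : tsupport (fun x ↦ b (x - a)) ⊆ closedBall a ((r + R) / 2) := by
    refine closure_minimal (fun x hx ↦ ?_) isClosed_closedBall
    have : x - a ∈ ball 0 b.rOut := b.support_eq ▸ hx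
    rw [mem_ball_zero_iff, ← dist_eq_norm] at this
    exact le_of_lt this
  refine
    { contDiff := hb.comp (contDiff_id.sub contDiff_const)
      hasCompactSupport := (isCompact_closedBall a _).of_isClosed_subset (isClosed_tsupport _) hsupp
      abs_le_one := fun x ↦ abs_le.2 ⟨by linarith [b.nonneg (x := x - a)], b.le_one⟩
      nnnorm_fderiv_le := fun x ↦ by rw [fderiv_comp_sub]; exact hL ⟨x - a, rfl⟩
      eqOn_one := fun x hx ↦ b.one_of_mem_closedBall ?_
      tsupport_subset := hsupp.trans (closedBall_subset_ball (by linarith)) }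
  rw [mem_closedBall_zero_iff, ← dist_eq_norm]
  exact le_of_lt hx

theorem IsCutoff.nnnorm_fderiv_mul_le {χ : E → ℝ} {L : ℝ≥0} {s t : Set E} (hχ : IsCutoff χ L s t)
    {ψ : E → ℝ} (hψ : Differentiable ℝ ψ) (x : E) :
    ‖fderiv ℝ (fun y ↦ ψ y * χ y) x‖₊ ≤ L * ‖ψ x‖₊ + ‖fderiv ℝ ψ x‖₊ := by
  rw [fderiv_fun_mul (hψ x) ((hχ.contDiff.differentiable one_ne_zero) x)]
  refine (nnnorm_add_le _ _).trans (add_le_add ?_ ?_)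
  · rw [nnnorm_smul, mul_comm]
    exact mul_le_mul_left (hχ.nnnorm_fderiv_le x) _
  · rw [nnnorm_smul]
    refine mul_le_of_le_one_left zero_le ?_
    rw [← NNReal.coe_le_one, coe_nnnorm, Real.norm_eq_abs]
    exact hχ.abs_le_one x

end Cutoff

section HaarMeasure
variable {E : Type*} [NormedAddCommGroup E] [NormedSpace ℝ E] [FiniteDimensional ℝ E]
  [MeasurableSpace E] [BorelSpace E] (μ : Measure E) [μ.IsAddHaarMeasure]

theorem lintegral_rpow_one_add_inv_finrank_le {u : E → ℝ} (hu : ContDiff ℝ 1 u)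
    (h2u : HasCompactSupport u) {p : ℝ} (hp : (finrank ℝ E : ℝ).HolderConjugate p) :
    ∫⁻ x, ‖u x‖ₑ ^ (1 + 1 / (finrank ℝ E : ℝ)) ∂μ ≤
      (lintegralPowLePowLIntegralFDerivConst μ p : ℝ≥0∞) ^ (1 / p) *
        (∫⁻ x, ‖fderiv ℝ u x‖ₑ ∂μ) * (∫⁻ x, ‖u x‖ₑ ∂μ) ^ (1 / (finrank ℝ E : ℝ)) := by
  have hp0 : 0 < p := hp.symm.pos
  refine (lintegral_rpow_one_add_inv_le μ hp.symm hu.continuous.enorm.aemeasurable).trans ?_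
  gcongr
  calc (∫⁻ x, ‖u x‖ₑ ^ p ∂μ) ^ (1 / p)
      ≤ ((lintegralPowLePowLIntegralFDerivConst μ p : ℝ≥0∞) *
          (∫⁻ x, ‖fderiv ℝ u x‖ₑ ∂μ) ^ p) ^ (1 / p) := by
        gcongr
        exact lintegral_pow_le_pow_lintegral_fderiv μ hu h2u hp
    _ = _ := by
        rw [ENNReal.mul_rpow_of_nonneg _ _ (by positivity), ← ENNReal.rpow_mul,
          mul_one_div_cancel hp0.ne', ENNReal.rpow_one]

theorem IsCutoff.setLIntegral_rpow_le {χ : E → ℝ} {L : ℝ≥0} {s t : Set E}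
    (hχ : IsCutoff χ L s t) (hs : MeasurableSet s) (ht : MeasurableSet t)
    {ψ : E → ℝ} (hψ : ContDiff ℝ 1 ψ) {p : ℝ} (hp : (finrank ℝ E : ℝ).HolderConjugate p) :
    ∫⁻ x in s, ‖ψ x‖ₑ ^ (1 + 1 / (finrank ℝ E : ℝ)) ∂μ ≤
      (lintegralPowLePowLIntegralFDerivConst μ p : ℝ≥0∞) ^ (1 / p) *
        (∫⁻ x in t, L * ‖ψ x‖ₑ + ‖fderiv ℝ ψ x‖ₑ ∂μ) *
        (∫⁻ x in t, ‖ψ x‖ₑ ∂μ) ^ (1 / (finrank ℝ E : ℝ)) := by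
  set u : E → ℝ := fun x ↦ ψ x * χ x
  have htu : tsupport u ⊆ t := tsupport_mul_subset_right.trans hχ.tsupport_subset
  have hsupp_u : Function.support (fun x ↦ ‖u x‖ₑ) ⊆ t := fun x hx ↦
    htu (subset_tsupport _ (by simpa using hx))
  have hsupp_du : Function.support (fun x ↦ ‖fderiv ℝ u x‖ₑ) ⊆ t := fun x hx ↦
    htu (support_fderiv_subset ℝ fun h ↦ hx (by simp [h, enorm_eq_nnnorm]))
  calc ∫⁻ x in s, ‖ψ x‖ₑ ^ (1 + 1 / (finrank ℝ E : ℝ)) ∂μ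
      = ∫⁻ x in s, ‖u x‖ₑ ^ (1 + 1 / (finrank ℝ E : ℝ)) ∂μ :=
        setLIntegral_congr_fun hs fun x hx ↦ by simp [u, hχ.eqOn_one hx]
    _ ≤ ∫⁻ x, ‖u x‖ₑ ^ (1 + 1 / (finrank ℝ E : ℝ)) ∂μ := setLIntegral_le_lintegral _ _
    _ ≤ _ := lintegral_rpow_one_add_inv_finrank_le μ (hψ.mul hχ.contDiff)
        hχ.hasCompactSupport.mul_left hp
    _ ≤ _ := by
      rw [← setLIntegral_eq_of_support_subset hsupp_u,
        ← setLIntegral_eq_of_support_subset hsupp_du]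
      gcongr _ * ?_ * ?_ ^ _
      · refine setLIntegral_mono' ht fun x _ ↦ ?_
        simp only [enorm_eq_nnnorm]
        exact_mod_cast hχ.nnnorm_fderiv_mul_le (hψ.differentiable one_ne_zero) x
      · refine setLIntegral_mono' ht fun x _ ↦ ?_
        rw [enorm_mul]
        refine mul_le_of_le_one_right zero_le ?_
        rw [Real.enorm_eq_ofReal_abs, ENNReal.ofReal_le_one]
        exact hχ.abs_le_one x

theorem measurable_uncurry_indicator_ball {f : E → ℝ≥0∞} (hf : Measurable f) (r : ℝ) :
    Measurable fun z : E × E ↦ (ball z.1 r).indicator f z.2 :=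
  (hf.comp measurable_snd).indicator
    (isOpen_lt (continuous_snd.dist continuous_fst) continuous_const).measurableSet

theorem measurable_setLIntegral_ball {f : E → ℝ≥0∞} (hf : Measurable f) (r : ℝ) :
    Measurable fun a ↦ ∫⁻ x in ball a r, f x ∂μ := by
  simp_rw [← lintegral_indicator measurableSet_ball]
  exact (measurable_uncurry_indicator_ball hf r).lintegral_prod_right'

theorem lintegral_setLIntegral_ball {f : E → ℝ≥0∞} (hf : Measurable f) (r : ℝ) :
    ∫⁻ a, ∫⁻ x in ball a r, f x ∂μ ∂μ = μ (ball 0 r) * ∫⁻ x, f x ∂μ := by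
  calc ∫⁻ a, ∫⁻ x in ball a r, f x ∂μ ∂μ
      = ∫⁻ a, ∫⁻ x, (ball a r).indicator f x ∂μ ∂μ := by
        simp_rw [lintegral_indicator measurableSet_ball]
    _ = ∫⁻ x, ∫⁻ a, (ball a r).indicator f x ∂μ ∂μ :=
        lintegral_lintegral_swap (measurable_uncurry_indicator_ball hf r).aemeasurable
    _ = ∫⁻ x, μ (ball 0 r) * f x ∂μ := by
        congr with x
        have : ∀ a, (ball a r).indicator f x = (ball x r).indicator (fun _ ↦ f x) a :=
          fun a ↦ by simp only [Set.indicator, mem_ball, dist_comm]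
        simp_rw [this, lintegral_indicator_const measurableSet_ball,
          Measure.addHaar_ball_center, mul_comm]
    _ = _ := lintegral_const_mul _ hf

theorem measure_ball_mul_lintegral_le_of_setLIntegral_ball_le {F G : E → ℝ≥0∞}
    (hF : Measurable F) (hG : Measurable G) {r R : ℝ} {c : ℝ≥0∞}
    (h : ∀ a, ∫⁻ x in ball a r, F x ∂μ ≤ c * ∫⁻ x in ball a R, G x ∂μ) :
    μ (ball 0 r) * ∫⁻ x, F x ∂μ ≤ c * (μ (ball 0 R) * ∫⁻ x, G x ∂μ) := by
  rw [← lintegral_setLIntegral_ball μ hF, ← lintegral_setLIntegral_ball μ hG,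
    ← lintegral_const_mul _ (measurable_setLIntegral_ball μ hG R)]
  exact lintegral_mono h

theorem exists_lintegral_rpow_le_mul_iSup (hE : 2 ≤ finrank ℝ E) :
    ∃ M : ℝ≥0∞, M ≠ ∞ ∧ ∀ ψ : E → ℝ, ContDiff ℝ 1 ψ →
      ∫⁻ x, ‖ψ x‖ₑ ^ (1 + 1 / (finrank ℝ E : ℝ)) ∂μ ≤
        M * (∫⁻ x, ‖ψ x‖ₑ ∂μ + ∫⁻ x, ‖fderiv ℝ ψ x‖ₑ ∂μ) *
          (⨆ a, ∫⁻ x in ball a 1, ‖ψ x‖ₑ ∂μ) ^ (1 / (finrank ℝ E : ℝ)) := by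
  have hp := Real.HolderConjugate.conjExponent (p := finrank ℝ E) (by exact_mod_cast hE)
  set K : ℝ≥0∞ := (lintegralPowLePowLIntegralFDerivConst μ (finrank ℝ E : ℝ).conjExponent : ℝ≥0∞) ^
    (1 / (finrank ℝ E : ℝ).conjExponent)
  have hK : K ≠ ∞ := rpow_ne_top_of_nonneg (one_div_nonneg.2 hp.symm.nonneg) coe_ne_top
  have hball₀ : μ (ball 0 (1 / 2)) ≠ 0 := (measure_ball_pos μ 0 one_half_pos).ne'
  have hball₀' : μ (ball 0 (1 / 2)) ≠ ∞ := measure_ball_lt_top.ne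
  obtain ⟨L, hχ⟩ := exists_isCutoff_ball (E := E) one_half_pos one_half_lt_one
  refine ⟨K * μ (ball 0 1) * (L + 1) / μ (ball 0 (1 / 2)),
    div_ne_top (by finiteness) hball₀, fun ψ hψ ↦ ?_⟩
  set S := ⨆ a, ∫⁻ x in ball a 1, ‖ψ x‖ₑ ∂μ
  have hψ_meas : Measurable fun x ↦ ‖ψ x‖ₑ := hψ.continuous.enorm.measurable
  have hdψ_meas : Measurable fun x ↦ ‖fderiv ℝ ψ x‖ₑ :=
    (hψ.continuous_fderiv one_ne_zero).enorm.measurable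
  have hlocal : ∀ a, ∫⁻ x in ball a (1 / 2), ‖ψ x‖ₑ ^ (1 + 1 / (finrank ℝ E : ℝ)) ∂μ ≤
      K * S ^ (1 / (finrank ℝ E : ℝ)) *
        ∫⁻ x in ball a 1, L * ‖ψ x‖ₑ + ‖fderiv ℝ ψ x‖ₑ ∂μ := fun a ↦ by
    obtain ⟨χ, hχa⟩ := hχ a
    refine (hχa.setLIntegral_rpow_le μ measurableSet_ball measurableSet_ball hψ hp).trans ?_
    rw [mul_right_comm]
    gcongr
    exact le_iSup (fun a ↦ ∫⁻ x in ball a 1, ‖ψ x‖ₑ ∂μ) a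
  have haverage := measure_ball_mul_lintegral_le_of_setLIntegral_ball_le μ
    (hψ_meas.pow_const _) (G := fun x ↦ L * ‖ψ x‖ₑ + ‖fderiv ℝ ψ x‖ₑ)
    ((hψ_meas.const_mul _).add hdψ_meas) hlocal
  have hg_le : ∫⁻ x, L * ‖ψ x‖ₑ + ‖fderiv ℝ ψ x‖ₑ ∂μ ≤
      (L + 1) * (∫⁻ x, ‖ψ x‖ₑ ∂μ + ∫⁻ x, ‖fderiv ℝ ψ x‖ₑ ∂μ) := by
    rw [lintegral_add_left (hψ_meas.const_mul _), lintegral_const_mul _ hψ_meas, mul_add]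
    gcongr ?_ + ?_
    · exact mul_le_mul_left le_self_add _
    · exact le_mul_of_one_le_left' le_add_self
  calc ∫⁻ x, ‖ψ x‖ₑ ^ (1 + 1 / (finrank ℝ E : ℝ)) ∂μ
      = (μ (ball 0 (1 / 2)))⁻¹ *
          (μ (ball 0 (1 / 2)) * ∫⁻ x, ‖ψ x‖ₑ ^ (1 + 1 / (finrank ℝ E : ℝ)) ∂μ) :=
        (ENNReal.inv_mul_cancel_left hball₀ hball₀').symm
    _ ≤ (μ (ball 0 (1 / 2)))⁻¹ * (K * S ^ (1 / (finrank ℝ E : ℝ)) * (μ (ball 0 1) *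
          ((L + 1) * (∫⁻ x, ‖ψ x‖ₑ ∂μ + ∫⁻ x, ‖fderiv ℝ ψ x‖ₑ ∂μ)))) := by
        grw [haverage, hg_le]
    _ = _ := by rw [ENNReal.div_eq_inv_mul]; ring

theorem exists_pos_mul_integral_rpow_le (hE : 2 ≤ finrank ℝ E) :
    ∃ C : ℝ, 0 < C ∧ ∀ ψ : E → ℝ, ContDiff ℝ 1 ψ → Integrable ψ μ →
      Integrable (fun x ↦ ‖fderiv ℝ ψ x‖) μ →
      C * ∫ x, |ψ x| ^ (1 + 1 / (finrank ℝ E : ℝ)) ∂μ ≤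
        ((∫ x, |ψ x| ∂μ) + ∫ x, ‖fderiv ℝ ψ x‖ ∂μ) *
          (⨆ a, ∫ x in ball a 1, |ψ x| ∂μ) ^ (1 / (finrank ℝ E : ℝ)) := by
  obtain ⟨M, hM, hbound⟩ := exists_lintegral_rpow_le_mul_iSup μ hE
  refine ⟨(M.toReal + 1)⁻¹, by positivity, fun ψ hψ hψ_int hdψ_int ↦ ?_⟩
  have hS : 0 ≤ ⨆ a, ∫ x in ball a 1, |ψ x| ∂μ :=
    Real.iSup_nonneg fun a ↦ setIntegral_nonneg measurableSet_ball fun x _ ↦ abs_nonneg _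
  rw [integral_abs_rpow_eq_toReal_lintegral hψ.continuous.aestronglyMeasurable (by positivity)]
  refine inv_toReal_add_one_mul_toReal_le hM (by positivity) ((hbound ψ hψ).trans ?_)
  rw [ENNReal.ofReal_mul (by positivity), ENNReal.ofReal_add (by positivity) (by positivity),
    ← lintegral_enorm_eq_ofReal_integral_abs hψ_int,
    ofReal_integral_eq_lintegral_ofReal hdψ_int (ae_of_all _ fun _ ↦ norm_nonneg _),
    ← ENNReal.ofReal_rpow_of_nonneg hS (by positivity), ← mul_assoc]
  simp_rw [ofReal_norm]
  gcongr
  exact iSup_setLIntegral_enorm_le_ofReal hψ_int _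

end HaarMeasure

/-- There exists a universal constant `C > 0` such that for every
`ψ ∈ W^{1,1}(ℝ³)` (modeled as a `C¹` function with `ψ` and `‖∇ψ‖` integrable),
`‖ψ‖_{W^{1,1}} · (sup_a ∫_{B₁(a)} |ψ|)^{1/3} ≥ C ∫ |ψ|^{4/3}`. -/
theorem stmt0 :
    ∃ C : ℝ, 0 < C ∧
      ∀ ψ : EuclideanSpace ℝ (Fin 3) → ℝ,
        ContDiff ℝ 1 ψ →
        Integrable ψ →
        Integrable (fun x => ‖fderiv ℝ ψ x‖) →
        C * ∫ x, |ψ x| ^ ((4 : ℝ) / 3) ≤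
          ((∫ x, |ψ x|) + ∫ x, ‖fderiv ℝ ψ x‖) *
            (⨆ a : EuclideanSpace ℝ (Fin 3), ∫ x in ball a 1, |ψ x|) ^ ((1 : ℝ) / 3) := by
  have h := exists_pos_mul_integral_rpow_le (volume : Measure (EuclideanSpace ℝ (Fin 3)))
  norm_num [finrank_euclideanSpace] at h
  exact h
end

section
/- Suppose V : ℝ³ → ℝ can be written as V = V₁ + V₂ with V₁ ∈ L^{5/2}(ℝ³), V₂ ∈ L^∞(ℝ³), and V(x) → 0 as |x| → ∞. Let (uₙ) and (vₙ) be sequences bounded in L²(ℝ³) ∩ L^{10/3}(ℝ³) such that uₙ − vₙ → 0 in L²_loc(ℝ³). Then ∫_{ℝ³} V(|uₙ|² − |vₙ|²) dx → 0 as n → ∞. -/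
/-!
Write `gₙ = uₙ² - vₙ²`. The `L²` and `L^{10/3}` bounds make `gₙ` bounded in `L¹` and in
`L^{5/3}`, and on each ball `B_R` Cauchy–Schwarz gives
`∫_{B_R} |gₙ| ≤ ‖uₙ - vₙ‖_{L²(B_R)} ‖uₙ + vₙ‖₂ → 0`.
Given `δ > 0`, choose `R` with `|V| ≤ δ` off `B_R` and `M` with `‖V₁ 1_{|V₁| ≥ M}‖_{5/2} ≤ δ`.
Then `|V| ≤ δ + (M + ‖V₂‖_∞) 1_{B_R} + |V₁| 1_{|V₁| ≥ M}` almost everywhere, and Hölder's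
inequality with exponents `5/2, 5/3` on the last term bounds `∫ |V gₙ|` by
`δ ‖gₙ‖₁ + (M + ‖V₂‖_∞) ∫_{B_R} |gₙ| + δ ‖gₙ‖_{5/3}`.
-/

open MeasureTheory Filter Set ENNReal Topology
open scoped NNReal

variable {α : Type*} [MeasurableSpace α] {μ : Measure α}

lemma eLpNorm_sq_eq (f : α → ℝ) (p : ℝ≥0∞) :
    eLpNorm (fun x => f x ^ 2) p μ = eLpNorm f (p * 2) μ ^ 2 := by
  have h := eLpNorm_norm_rpow (μ := μ) (p := p) f two_pos
  simp only [Real.rpow_two, Real.norm_eq_abs, sq_abs, ENNReal.rpow_two] at h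
  simpa using h

lemma eLpNorm_sq_sub_sq_le {f g : α → ℝ} (hf : AEStronglyMeasurable f μ)
    (hg : AEStronglyMeasurable g μ) {p B : ℝ≥0∞} (hp : 1 ≤ p) (hfB : eLpNorm f (p * 2) μ ≤ B)
    (hgB : eLpNorm g (p * 2) μ ≤ B) :
    eLpNorm (fun x => f x ^ 2 - g x ^ 2) p μ ≤ B ^ 2 + B ^ 2 := by
  calc eLpNorm (fun x => f x ^ 2 - g x ^ 2) p μ
      ≤ eLpNorm (fun x => f x ^ 2) p μ + eLpNorm (fun x => g x ^ 2) p μ :=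
        eLpNorm_sub_le (hf.pow 2) (hg.pow 2) hp
    _ ≤ B ^ 2 + B ^ 2 := by rw [eLpNorm_sq_eq, eLpNorm_sq_eq]; gcongr

lemma eLpNorm_sq_sub_sq_le_mul {f g : α → ℝ} (hf : AEStronglyMeasurable f μ)
    (hg : AEStronglyMeasurable g μ) :
    eLpNorm (fun x => f x ^ 2 - g x ^ 2) 1 μ ≤ eLpNorm (f - g) 2 μ * eLpNorm (f + g) 2 μ := by
  have h := eLpNorm_smul_le_mul_eLpNorm (p := 2) (q := 2) (r := 1) (hf.add hg) (hf.sub hg)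
  convert h using 2
  ext x
  simp only [smul_eq_mul, Pi.mul_apply, Pi.sub_apply, Pi.add_apply]
  ring

lemma tendsto_eLpNorm_sq_sub_sq {u v : ℕ → α → ℝ} {B : ℝ≥0∞} (hB : B ≠ ∞)
    (hu : ∀ n, AEStronglyMeasurable (u n) μ) (hv : ∀ n, AEStronglyMeasurable (v n) μ)
    (huB : ∀ n, eLpNorm (u n) 2 μ ≤ B) (hvB : ∀ n, eLpNorm (v n) 2 μ ≤ B)
    (h : Tendsto (fun n => eLpNorm (u n - v n) 2 μ) atTop (𝓝 0)) :
    Tendsto (fun n => eLpNorm (fun x => u n x ^ 2 - v n x ^ 2) 1 μ) atTop (𝓝 0) := by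
  have hlim : Tendsto (fun n => eLpNorm (u n - v n) 2 μ * (B + B)) atTop (𝓝 0) := by
    simpa using ENNReal.Tendsto.mul_const h (Or.inr (add_ne_top.2 ⟨hB, hB⟩))
  refine tendsto_of_tendsto_of_tendsto_of_le_of_le tendsto_const_nhds hlim (fun _ => bot_le)
    fun n => (eLpNorm_sq_sub_sq_le_mul (hu n) (hv n)).trans ?_
  gcongr
  exact (eLpNorm_add_le (hu n) (hv n) one_le_two).trans (add_le_add (huB n) (hvB n))

lemma tendsto_eLpNorm_two_of_tendsto_integral_sq {f : ℕ → α → ℝ} (hf : ∀ n, MemLp (f n) 2 μ)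
    (h : Tendsto (fun n => ∫ x, |f n x| ^ 2 ∂μ) atTop (𝓝 0)) :
    Tendsto (fun n => eLpNorm (f n) 2 μ) atTop (𝓝 0) := by
  have hsqrt : Tendsto (fun t : ℝ => ENNReal.ofReal (t ^ (1 / 2 : ℝ))) (𝓝 0) (𝓝 0) := by
    have hcont : Continuous fun t : ℝ => ENNReal.ofReal (t ^ (1 / 2 : ℝ)) :=
      ENNReal.continuous_ofReal.comp (Real.continuous_rpow_const (by norm_num))
    simpa using hcont.tendsto 0
  convert hsqrt.comp h using 2 with n
  rw [(hf n).eLpNorm_eq_integral_rpow_norm two_ne_zero ofNat_ne_top]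
  simp

lemma tendsto_eLpNorm_restrict_sq_sub_sq {u v : ℕ → α → ℝ} {B : ℝ≥0∞} (hB : B ≠ ∞)
    (hu : ∀ n, AEStronglyMeasurable (u n) μ) (hv : ∀ n, AEStronglyMeasurable (v n) μ)
    (huB : ∀ n, eLpNorm (u n) 2 μ ≤ B) (hvB : ∀ n, eLpNorm (v n) 2 μ ≤ B) {S : Set α}
    (h : Tendsto (fun n => ∫ x in S, |u n x - v n x| ^ 2 ∂μ) atTop (𝓝 0)) :
    Tendsto (fun n => eLpNorm (fun x => u n x ^ 2 - v n x ^ 2) 1 (μ.restrict S)) atTop (𝓝 0) := by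
  have hmem : ∀ n, MemLp (u n - v n) 2 μ := fun n =>
    MemLp.sub ⟨hu n, (huB n).trans_lt hB.lt_top⟩ ⟨hv n, (hvB n).trans_lt hB.lt_top⟩
  exact tendsto_eLpNorm_sq_sub_sq hB (fun n => (hu n).restrict) (fun n => (hv n).restrict)
    (fun n => (eLpNorm_restrict_le _ _ _ _).trans (huB n))
    (fun n => (eLpNorm_restrict_le _ _ _ _).trans (hvB n))
    (tendsto_eLpNorm_two_of_tendsto_integral_sq (fun n => (hmem n).restrict S) h)

lemma exists_enorm_add_le_const_add_small {V₁ V₂ : α → ℝ} {p : ℝ≥0∞} (h₁ : MemLp V₁ p μ)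
    (h₂ : MemLp V₂ ∞ μ) {δ : ℝ≥0} (hδ : 0 < δ) :
    ∃ c : ℝ≥0∞, c ≠ ∞ ∧ ∃ W : α → ℝ, AEStronglyMeasurable W μ ∧ eLpNorm W p μ ≤ δ ∧
      ∀ᵐ x ∂μ, ‖V₁ x + V₂ x‖ₑ ≤ c + ‖W x‖ₑ := by
  obtain ⟨f, hf, hV₁f⟩ := h₁.1
  obtain ⟨M, hM⟩ := (h₁.ae_eq hV₁f).eLpNorm_indicator_norm_ge_le hf (NNReal.coe_pos.2 hδ)
  set W := {x | M ≤ ‖f x‖₊}.indicator f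
  have hW : AEStronglyMeasurable W μ :=
    (hf.indicator (measurableSet_le measurable_const
      hf.measurable.nnnorm.coe_nnreal_real)).aestronglyMeasurable
  have hV₂ : eLpNormEssSup V₂ μ ≠ ∞ := by
    simpa [eLpNorm_exponent_top] using h₂.eLpNorm_ne_top
  refine ⟨ENNReal.ofReal M + eLpNormEssSup V₂ μ, add_ne_top.2 ⟨ofReal_ne_top, hV₂⟩, W, hW,
    by simpa using hM, ?_⟩
  filter_upwards [hV₁f, ae_le_eLpNormEssSup (f := V₂) (μ := μ)] with x h₁x h₂x
  have hf_le : ‖f x‖ₑ ≤ ENNReal.ofReal M + ‖W x‖ₑ := by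
    by_cases hx : M ≤ ‖f x‖₊
    · have hWx : W x = f x := indicator_of_mem (show x ∈ {x | M ≤ ‖f x‖₊} from hx) f
      rw [hWx]
      exact le_add_self
    · rw [← ofReal_norm]
      exact le_add_right (ofReal_le_ofReal (not_le.1 hx).le)
  calc ‖V₁ x + V₂ x‖ₑ ≤ ‖V₁ x‖ₑ + ‖V₂ x‖ₑ := enorm_add_le _ _
    _ ≤ ENNReal.ofReal M + ‖W x‖ₑ + eLpNormEssSup V₂ μ := by
      rw [h₁x]
      gcongr
    _ = _ := add_right_comm _ _ _

lemma exists_ball_enorm_le_of_tendsto_cocompact {X E : Type*} [PseudoMetricSpace X]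
    [NormedAddCommGroup E] {V : X → E} (h : Tendsto V (cocompact X) (𝓝 0)) (x₀ : X)
    {δ : ℝ≥0∞} (hδ : 0 < δ) : ∃ R > 0, ∀ x ∉ Metric.ball x₀ R, ‖V x‖ₑ ≤ δ := by
  have hev : ∀ᶠ x in cocompact X, ‖V x‖ₑ ≤ δ := by
    simpa using h.enorm.eventually (eventually_le_nhds (by simpa using hδ))
  obtain ⟨K, hK, hKV⟩ := mem_cocompact.1 hev
  obtain ⟨R, hR, hKR⟩ := hK.isBounded.subset_ball_lt 0 x₀
  exact ⟨R, hR, fun x hx => hKV fun hxK => hx (hKR hxK)⟩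

lemma lintegral_enorm_mul_le {p q : ℝ≥0∞} [HolderConjugate p q] {V g W : α → ℝ} {S : Set α}
    {δ c : ℝ≥0∞} (hS : MeasurableSet S) (hg : AEStronglyMeasurable g μ)
    (hW : AEStronglyMeasurable W μ)
    (hV : ∀ᵐ x ∂μ, ‖V x‖ₑ ≤ δ + S.indicator (fun _ => c) x + ‖W x‖ₑ) :
    ∫⁻ x, ‖V x * g x‖ₑ ∂μ ≤
      δ * eLpNorm g 1 μ + c * eLpNorm g 1 (μ.restrict S) + eLpNorm W p μ * eLpNorm g q μ := by
  have hWg : ∫⁻ x, ‖W x‖ₑ * ‖g x‖ₑ ∂μ ≤ eLpNorm W p μ * eLpNorm g q μ := by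
    simpa [eLpNorm_one_eq_lintegral_enorm] using
      eLpNorm_smul_le_mul_eLpNorm (p := p) (q := q) (r := 1) hg hW
  calc ∫⁻ x, ‖V x * g x‖ₑ ∂μ
      ≤ ∫⁻ x, δ * ‖g x‖ₑ + S.indicator (fun x => c * ‖g x‖ₑ) x + ‖W x‖ₑ * ‖g x‖ₑ ∂μ := by
        refine lintegral_mono_ae (hV.mono fun x hx => ?_)
        rw [enorm_mul]
        grw [hx]
        by_cases hxS : x ∈ S <;> simp [hxS, add_mul]
    _ = δ * eLpNorm g 1 μ + c * eLpNorm g 1 (μ.restrict S) + ∫⁻ x, ‖W x‖ₑ * ‖g x‖ₑ ∂μ := by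
        have hWg_meas : AEMeasurable (fun x => ‖W x‖ₑ * ‖g x‖ₑ) μ := hW.enorm.mul hg.enorm
        rw [lintegral_add_right' _ hWg_meas, lintegral_add_left' (hg.enorm.const_mul δ),
          lintegral_const_mul'' _ hg.enorm, lintegral_indicator hS,
          lintegral_const_mul'' _ hg.enorm.restrict, eLpNorm_one_eq_lintegral_enorm,
          eLpNorm_one_eq_lintegral_enorm]
    _ ≤ _ := by gcongr

lemma tendsto_lintegral_enorm_mul_zero {p q : ℝ≥0∞} [HolderConjugate p q] {V : α → ℝ}
    {g : ℕ → α → ℝ} {D : ℝ≥0∞} (hD : D ≠ ∞) (hg : ∀ n, AEStronglyMeasurable (g n) μ)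
    (hg₁ : ∀ n, eLpNorm (g n) 1 μ ≤ D) (hgq : ∀ n, eLpNorm (g n) q μ ≤ D)
    (hV : ∀ δ : ℝ≥0, 0 < δ → ∃ (S : Set α) (c : ℝ≥0∞) (W : α → ℝ), MeasurableSet S ∧ c ≠ ∞ ∧
      AEStronglyMeasurable W μ ∧ eLpNorm W p μ ≤ δ ∧
      (∀ᵐ x ∂μ, ‖V x‖ₑ ≤ δ + S.indicator (fun _ => c) x + ‖W x‖ₑ) ∧
      Tendsto (fun n => eLpNorm (g n) 1 (μ.restrict S)) atTop (𝓝 0)) :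
    Tendsto (fun n => ∫⁻ x, ‖V x * g n x‖ₑ ∂μ) atTop (𝓝 0) := by
  refine ENNReal.tendsto_nhds_zero.2 fun ε hε => ?_
  have hε3 : ε / 3 ≠ 0 := (ENNReal.div_pos hε.ne' ofNat_ne_top).ne'
  obtain ⟨δ, hδ, hδD⟩ := ENNReal.exists_nnreal_pos_mul_lt hD hε3
  obtain ⟨S, c, W, hS, hc, hW, hWp, hVbound, hgS⟩ := hV δ hδ
  have hcgS : ∀ᶠ n in atTop, c * eLpNorm (g n) 1 (μ.restrict S) ≤ ε / 3 := by
    have := ENNReal.Tendsto.const_mul hgS (Or.inr hc)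
    rw [mul_zero] at this
    exact this.eventually (eventually_le_nhds (pos_iff_ne_zero.2 hε3))
  filter_upwards [hcgS] with n hn
  calc ∫⁻ x, ‖V x * g n x‖ₑ ∂μ
      ≤ δ * eLpNorm (g n) 1 μ + c * eLpNorm (g n) 1 (μ.restrict S)
        + eLpNorm W p μ * eLpNorm (g n) q μ := lintegral_enorm_mul_le hS (hg n) hW hVbound
    _ ≤ δ * D + ε / 3 + δ * D := by gcongr; exacts [hg₁ n, hgq n]
    _ ≤ ε / 3 + ε / 3 + ε / 3 := by gcongr
    _ = ε := ENNReal.add_thirds ε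

theorem tendsto_lintegral_enorm_mul_zero_of_tendsto_cocompact {X : Type*} [PseudoMetricSpace X]
    [MeasurableSpace X] [OpensMeasurableSpace X] {μ : Measure X} {p q : ℝ≥0∞}
    [HolderConjugate p q] {V₁ V₂ : X → ℝ} (h₁ : MemLp V₁ p μ) (h₂ : MemLp V₂ ∞ μ)
    (hlim : Tendsto (V₁ + V₂) (cocompact X) (𝓝 0)) {g : ℕ → X → ℝ} {D : ℝ≥0∞} (hD : D ≠ ∞)
    (hg : ∀ n, AEStronglyMeasurable (g n) μ)
    (hg₁ : ∀ n, eLpNorm (g n) 1 μ ≤ D) (hgq : ∀ n, eLpNorm (g n) q μ ≤ D) (x₀ : X)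
    (hloc : ∀ R > 0, Tendsto (fun n => eLpNorm (g n) 1 (μ.restrict (Metric.ball x₀ R)))
      atTop (𝓝 0)) :
    Tendsto (fun n => ∫⁻ x, ‖(V₁ x + V₂ x) * g n x‖ₑ ∂μ) atTop (𝓝 0) := by
  refine tendsto_lintegral_enorm_mul_zero (p := p) hD hg hg₁ hgq fun δ hδ => ?_
  obtain ⟨c, hc, W, hW, hWp, hVW⟩ := exists_enorm_add_le_const_add_small h₁ h₂ hδ
  obtain ⟨R, hR, hfar⟩ := exists_ball_enorm_le_of_tendsto_cocompact hlim x₀ (coe_pos.2 hδ)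
  refine ⟨Metric.ball x₀ R, c, W, measurableSet_ball, hc, hW, hWp, ?_, hloc R hR⟩
  filter_upwards [hVW] with x hx
  by_cases hxR : x ∈ Metric.ball x₀ R
  · rw [indicator_of_mem hxR, add_assoc]
    exact hx.trans le_add_self
  · exact (hfar x hxR).trans (le_add_right (le_add_right le_rfl))

lemma holderConjugate_ofReal_five_halves :
    HolderConjugate (.ofReal (5 / 2)) (.ofReal (5 / 3)) := by
  rw [holderConjugate_iff, ← ofReal_inv_of_pos (by norm_num), ← ofReal_inv_of_pos (by norm_num),
    ← ofReal_add (by norm_num) (by norm_num)]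
  norm_num

/-- Lemma 2.2 (Vlimit): if `V = V₁ + V₂` with `V₁ ∈ L^{5/2}`, `V₂ ∈ L^∞`, `V(x) → 0`
as `|x| → ∞`, and `(uₙ)`, `(vₙ)` are bounded in `L² ∩ L^{10/3}` with `uₙ − vₙ → 0`
in `L²_loc(ℝ³)`, then `∫ V(|uₙ|² − |vₙ|²) → 0`. -/
theorem stmt10 (V V1 V2 : EuclideanSpace ℝ (Fin 3) → ℝ)
    (hV : V = V1 + V2)
    (hV1 : MemLp V1 (ENNReal.ofReal (5 / 2)) volume)
    (hV2 : MemLp V2 ⊤ volume)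
    (hVlim : Tendsto V (cocompact (EuclideanSpace ℝ (Fin 3))) (nhds 0))
    (u v : ℕ → EuclideanSpace ℝ (Fin 3) → ℝ)
    (hmeas : ∀ n, AEStronglyMeasurable (u n) volume ∧ AEStronglyMeasurable (v n) volume)
    (hbdd : ∃ B : ENNReal, B ≠ ⊤ ∧ ∀ n,
        eLpNorm (u n) 2 volume ≤ B ∧ eLpNorm (u n) (ENNReal.ofReal (10 / 3)) volume ≤ B ∧
        eLpNorm (v n) 2 volume ≤ B ∧ eLpNorm (v n) (ENNReal.ofReal (10 / 3)) volume ≤ B)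
    (hloc : ∀ R > (0 : ℝ),
        Tendsto (fun n => ∫ x in Metric.ball (0 : EuclideanSpace ℝ (Fin 3)) R,
          |u n x - v n x| ^ 2) atTop (nhds 0))
    (hint : ∀ n, Integrable (fun x => V x * ((u n x) ^ 2 - (v n x) ^ 2))) :
    Tendsto (fun n => ∫ x, V x * ((u n x) ^ 2 - (v n x) ^ 2)) atTop (nhds 0) := by
  obtain ⟨B, hB, hbdd⟩ := hbdd
  subst hV
  have := holderConjugate_ofReal_five_halves
  have hg : ∀ n, AEStronglyMeasurable (fun x => u n x ^ 2 - v n x ^ 2) volume := fun n =>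
    ((hmeas n).1.pow 2).sub ((hmeas n).2.pow 2)
  have h53 : ENNReal.ofReal (5 / 3) * 2 = .ofReal (10 / 3) := by
    rw [← ofReal_ofNat 2, ← ofReal_mul (by norm_num)]
    norm_num
  have hg₁ : ∀ n, eLpNorm (fun x => u n x ^ 2 - v n x ^ 2) 1 volume ≤ B ^ 2 + B ^ 2 := fun n =>
    eLpNorm_sq_sub_sq_le (hmeas n).1 (hmeas n).2 le_rfl (by simpa using (hbdd n).1)
      (by simpa using (hbdd n).2.2.1)
  have hgq : ∀ n, eLpNorm (fun x => u n x ^ 2 - v n x ^ 2) (.ofReal (5 / 3)) volume ≤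
      B ^ 2 + B ^ 2 := fun n =>
    eLpNorm_sq_sub_sq_le (hmeas n).1 (hmeas n).2 (by norm_num) (h53 ▸ (hbdd n).2.1)
      (h53 ▸ (hbdd n).2.2.2)
  have hgloc : ∀ R > (0 : ℝ), Tendsto (fun n => eLpNorm (fun x => u n x ^ 2 - v n x ^ 2) 1
      (volume.restrict (Metric.ball 0 R))) atTop (𝓝 0) := fun R hR =>
    tendsto_eLpNorm_restrict_sq_sub_sq hB (fun n => (hmeas n).1) (fun n => (hmeas n).2)
      (fun n => (hbdd n).1) (fun n => (hbdd n).2.2.1) (hloc R hR)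
  simpa using tendsto_integral_of_L1 0 aestronglyMeasurable_zero (.of_forall hint) <| by
    simpa using tendsto_lintegral_enorm_mul_zero_of_tendsto_cocompact hV1 hV2 hVlim
      (by finiteness) hg hg₁ hgq 0 hgloc
end

section
/- Let Ω ⊂ ℝ³ be a set of finite perimeter with |Ω| = M, let B = B_{r_M}(0) be the ball of the same volume centered at the origin, and define the asymmetry γ(Ω) = min_{y∈ℝ³} ∫_{ℝ³} (𝟙_B(x) − 𝟙_Ω(x+y))/|x| dx. Suppose the quantitative isoperimetric-type inequality Per(Ω) − Per(B) ≥ μ₀ γ(Ω) holds with equality iff Ω is a translate of B, and the Coulomb estimate D(𝟙_B,𝟙_B) − D(𝟙_Ω,𝟙_Ω) ≤ M γ(Ω) holds. Then for V(x) = Z/|x| with Z ≥ 0 and any M < Z + μ₀, the energy E(Ω) = Per(Ω) − ∫_Ω V dx + D(𝟙_Ω,𝟙_Ω) satisfies E(Ω) − E(B) ≥ (Z + μ₀ − M) γ(Ω) > 0 whenever Ω is not a translate of B, so the ball B uniquely minimizes E among sets of volume M. -/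
/-!
Write `E(Ω) - E(B)` as the perimeter gap, plus the potential gap `∫_B V - ∫_Ω V`, minus the
Coulomb gap `D(𝟙_B,𝟙_B) - D(𝟙_Ω,𝟙_Ω)`. The first is `> μ₀ γ` unless `Ω` is a translate of `B`,
the last is `≤ M γ`, and the potential gap is `Z` times the `y = 0` term of the infimum defining
`γ`, hence `≥ Z γ`. Finally `γ ≥ 0` by the bathtub principle: `1/|x|` is radially decreasing, so
among sets of volume `|B|` its integral is largest on the centred ball `B`.
-/

open MeasureTheory Metric Set

/-- The Coulomb energy `D(f,g) = (1/2)∫∫ f(x)g(y)/|x−y| dx dy`. -/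
noncomputable def Dr (f g : EuclideanSpace ℝ (Fin 3) → ℝ) : ℝ :=
  (1 / 2) * ∫ x, ∫ y, f x * g y / ‖x - y‖

/-- The asymmetry `γ(Ω) = min_{y} ∫ (𝟙_B(x) − 𝟙_Ω(x+y))/|x| dx` relative to the ball `B`. -/
noncomputable def asym (B Ω : Set (EuclideanSpace ℝ (Fin 3))) : ℝ :=
  ⨅ y : EuclideanSpace ℝ (Fin 3),
    ∫ x, (B.indicator (fun _ => (1 : ℝ)) x - Ω.indicator (fun _ => (1 : ℝ)) (x + y)) / ‖x‖

section Bathtub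

variable {α : Type*} [MeasurableSpace α] {μ : Measure α}

/-- Bathtub principle: `t` is a superlevel set of `f`, so it carries the largest `∫ f` among
sets of its measure. -/
theorem setIntegral_le_setIntegral_of_measure_eq {f : α → ℝ} {s t : Set α} {c : ℝ}
    (hs : MeasurableSet s) (ht : MeasurableSet t) (hst : μ s = μ t) (ht_fin : μ t ≠ ⊤)
    (hfs : IntegrableOn f s μ) (hft : IntegrableOn f t μ)
    (hf_in : ∀ᵐ x ∂μ, x ∈ t → c ≤ f x) (hf_out : ∀ x ∉ t, f x ≤ c) :
    ∫ x in s, f x ∂μ ≤ ∫ x in t, f x ∂μ := by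
  have hts_fin : μ (t \ s) ≠ ⊤ := measure_ne_top_of_subset sdiff_subset ht_fin
  have hst_fin : μ (s \ t) ≠ ⊤ :=
    measure_ne_top_of_subset sdiff_subset (hst ▸ ht_fin)
  have hsdiff : μ.real (s \ t) = μ.real (t \ s) := by
    rw [measureReal_def, measureReal_def, measure_sdiff_symm hs.nullMeasurableSet
      ht.nullMeasurableSet hst (measure_ne_top_of_subset inter_subset_right ht_fin)]
  have h_out : ∫ x in s \ t, f x ∂μ ≤ c * μ.real (t \ s) := by
    rw [← hsdiff, mul_comm, ← smul_eq_mul, ← setIntegral_const]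
    exact setIntegral_mono_on (hfs.mono_set sdiff_subset) (integrableOn_const hst_fin)
      (hs.diff ht) fun x hx => hf_out x hx.2
  have h_in : c * μ.real (t \ s) ≤ ∫ x in t \ s, f x ∂μ := by
    rw [mul_comm, ← smul_eq_mul, ← setIntegral_const]
    exact setIntegral_mono_on_ae (integrableOn_const hts_fin) (hft.mono_set sdiff_subset)
      (ht.diff hs) (hf_in.mono fun x hx hxts => hx hxts.1)
  calc ∫ x in s, f x ∂μ = ∫ x in s ∩ t, f x ∂μ + ∫ x in s \ t, f x ∂μ :=
        (integral_inter_add_sdiff ht hfs).symm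
    _ ≤ ∫ x in t ∩ s, f x ∂μ + ∫ x in t \ s, f x ∂μ := by
        rw [inter_comm t s]; linarith
    _ = ∫ x in t, f x ∂μ := integral_inter_add_sdiff hs hft

end Bathtub

section InvNorm

variable {E : Type*} [NormedAddCommGroup E] [NormedSpace ℝ E] [FiniteDimensional ℝ E]
  [MeasurableSpace E] [BorelSpace E] {μ : Measure E} [μ.IsAddHaarMeasure]

theorem locallyIntegrable_inv_norm (hd : 1 < Module.finrank ℝ E) :
    LocallyIntegrable (fun x : E => ‖x‖⁻¹) μ :=
  locallyIntegrable_of_norm_le_rpow (C := 1) (α := 1) hd.le (by exact_mod_cast hd)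
    (ae_of_all _ fun x => by simp [Real.rpow_neg_one])
    (measurable_norm.inv).aestronglyMeasurable

theorem integrableOn_inv_norm (hd : 1 < Module.finrank ℝ E) {s : Set E} (hs : μ s ≠ ⊤) :
    IntegrableOn (fun x : E => ‖x‖⁻¹) s μ := by
  have h_ball : Integrable ((closedBall (0 : E) 1).indicator fun x => ‖x‖⁻¹) μ :=
    (integrable_indicator_iff measurableSet_closedBall).2
      ((locallyIntegrable_inv_norm hd).integrableOn_isCompact (isCompact_closedBall 0 1))
  refine Integrable.mono' (h_ball.integrableOn.add (integrableOn_const (C := (1 : ℝ)) hs))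
    (measurable_norm.inv).aestronglyMeasurable (ae_of_all _ fun x => ?_)
  rw [Real.norm_of_nonneg (inv_nonneg.2 (norm_nonneg x))]
  by_cases hx : ‖x‖ ≤ 1
  · simp [indicator_of_mem (mem_closedBall_zero_iff.2 hx)]
  · have := inv_lt_one_of_one_lt₀ (not_le.1 hx)
    simp [indicator_of_notMem (mem_closedBall_zero_iff.not.2 hx)]
    linarith

theorem setIntegral_inv_norm_le_ball (hd : 1 < Module.finrank ℝ E) {r : ℝ} (hr : 0 < r)
    {s : Set E} (hs : MeasurableSet s) (hμs : μ s = μ (ball 0 r)) :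
    ∫ x in s, ‖x‖⁻¹ ∂μ ≤ ∫ x in ball 0 r, ‖x‖⁻¹ ∂μ := by
  have : Nontrivial E := Module.nontrivial_of_finrank_pos (R := ℝ) (by omega)
  have h_ball_fin : μ (ball (0 : E) r) ≠ ⊤ := measure_ball_lt_top.ne
  refine setIntegral_le_setIntegral_of_measure_eq (c := r⁻¹) hs measurableSet_ball hμs
    h_ball_fin (integrableOn_inv_norm hd (hμs ▸ h_ball_fin)) (integrableOn_inv_norm hd h_ball_fin)
    ?_ fun x hx => ?_
  · -- `‖0‖⁻¹ = 0`, so the bound `r⁻¹ ≤ ‖x‖⁻¹` on the ball only holds off the origin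
    filter_upwards [μ.ae_ne 0] with x hx0 hx
    exact inv_anti₀ (norm_pos_iff.2 hx0) (mem_ball_zero_iff.1 hx).le
  · exact inv_anti₀ hr (by simpa using hx)

theorem integral_indicator_sub_indicator_div_norm (hd : 1 < Module.finrank ℝ E) {s t : Set E}
    (hs : MeasurableSet s) (ht : MeasurableSet t) (hμs : μ s ≠ ⊤) (hμt : μ t ≠ ⊤) :
    ∫ x, (s.indicator (fun _ => (1 : ℝ)) x - t.indicator (fun _ => (1 : ℝ)) x) / ‖x‖ ∂μ
      = (∫ x in s, ‖x‖⁻¹ ∂μ) - ∫ x in t, ‖x‖⁻¹ ∂μ := by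
  have h_eq : ∀ x : E, (s.indicator (fun _ => (1 : ℝ)) x - t.indicator (fun _ => (1 : ℝ)) x)
      / ‖x‖ = s.indicator (fun x => ‖x‖⁻¹) x - t.indicator (fun x => ‖x‖⁻¹) x := by
    intro x
    by_cases hxs : x ∈ s <;> by_cases hxt : x ∈ t <;> simp [hxs, hxt, div_eq_mul_inv]
  simp_rw [h_eq]
  rw [integral_sub, integral_indicator hs, integral_indicator ht]
  · exact (integrable_indicator_iff hs).2 (integrableOn_inv_norm hd hμs)
  · exact (integrable_indicator_iff ht).2 (integrableOn_inv_norm hd hμt)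

end InvNorm

section Asymmetry

local notation "E3" => EuclideanSpace ℝ (Fin 3)

theorem one_lt_finrank_euclideanSpace_fin_three : 1 < Module.finrank ℝ E3 := by
  simp

theorem integral_asym_integrand {B Ω : Set E3} (hB : MeasurableSet B) (hΩ : MeasurableSet Ω)
    (hB_fin : volume B ≠ ⊤) (hΩ_fin : volume Ω ≠ ⊤) (y : E3) :
    ∫ x, (B.indicator (fun _ => (1 : ℝ)) x - Ω.indicator (fun _ => (1 : ℝ)) (x + y)) / ‖x‖
      = (∫ x in B, ‖x‖⁻¹) - ∫ x in (· + y) ⁻¹' Ω, ‖x‖⁻¹ := by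
  have h_shift : ∀ x, Ω.indicator (fun _ => (1 : ℝ)) (x + y)
      = ((· + y) ⁻¹' Ω).indicator (fun _ => (1 : ℝ)) x := fun x =>
    (indicator_comp_right (fun x : E3 => x + y)).symm
  simp_rw [h_shift]
  exact integral_indicator_sub_indicator_div_norm one_lt_finrank_euclideanSpace_fin_three hB
    (hΩ.preimage (measurable_add_const y)) hB_fin (by rwa [measure_preimage_add_right])

variable {r : ℝ} {Ω : Set E3}

theorem integral_asym_integrand_ball_nonneg (hr : 0 < r) (hΩ : MeasurableSet Ω)
    (hvol : volume Ω = volume (ball (0 : E3) r)) (y : E3) :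
    0 ≤ ∫ x, ((ball (0 : E3) r).indicator (fun _ => (1 : ℝ)) x
      - Ω.indicator (fun _ => (1 : ℝ)) (x + y)) / ‖x‖ := by
  rw [integral_asym_integrand measurableSet_ball hΩ measure_ball_lt_top.ne
    (hvol ▸ measure_ball_lt_top.ne), sub_nonneg]
  exact setIntegral_inv_norm_le_ball one_lt_finrank_euclideanSpace_fin_three hr
    (hΩ.preimage (measurable_add_const y)) (by rw [measure_preimage_add_right, hvol])

theorem asym_ball_nonneg (hr : 0 < r) (hΩ : MeasurableSet Ω)
    (hvol : volume Ω = volume (ball (0 : E3) r)) : 0 ≤ asym (ball 0 r) Ω :=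
  le_ciInf (integral_asym_integrand_ball_nonneg hr hΩ hvol)

theorem asym_ball_le (hr : 0 < r) (hΩ : MeasurableSet Ω)
    (hvol : volume Ω = volume (ball (0 : E3) r)) :
    asym (ball 0 r) Ω ≤ (∫ x in ball (0 : E3) r, ‖x‖⁻¹) - ∫ x in Ω, ‖x‖⁻¹ := by
  refine (ciInf_le ⟨0, ?_⟩ 0).trans_eq ?_
  · rintro _ ⟨y, rfl⟩
    exact integral_asym_integrand_ball_nonneg hr hΩ hvol y
  rw [integral_asym_integrand measurableSet_ball hΩ measure_ball_lt_top.ne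
    (hvol ▸ measure_ball_lt_top.ne)]
  simp

end Asymmetry

theorem stmt19_general (Z M μ0 rM : ℝ) (hZ : 0 ≤ Z) (hM : 0 < M)
    (hMlt : M < Z + μ0)
    (B : Set (EuclideanSpace ℝ (Fin 3)))
    (hB : B = Metric.ball 0 rM) (hBvol : volume B = ENNReal.ofReal M)
    (FinPer : Set (EuclideanSpace ℝ (Fin 3)) → Prop)
    (Per : Set (EuclideanSpace ℝ (Fin 3)) → ℝ)
    (hQI : ∀ Ω, FinPer Ω → MeasurableSet Ω → volume Ω = ENNReal.ofReal M →
      μ0 * asym B Ω ≤ Per Ω - Per B ∧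
        (Per Ω - Per B = μ0 * asym B Ω ↔ ∃ v, Ω = (fun z => z + v) '' B))
    (hCoul : ∀ Ω, FinPer Ω → MeasurableSet Ω → volume Ω = ENNReal.ofReal M →
      Dr (B.indicator fun _ => 1) (B.indicator fun _ => 1) -
          Dr (Ω.indicator fun _ => 1) (Ω.indicator fun _ => 1) ≤ M * asym B Ω)
    (EE : Set (EuclideanSpace ℝ (Fin 3)) → ℝ)
    (hEE : ∀ Ω, EE Ω = Per Ω - (∫ x in Ω, Z / ‖x‖) +
      Dr (Ω.indicator fun _ => 1) (Ω.indicator fun _ => 1)) :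
    ∀ Ω, FinPer Ω → MeasurableSet Ω → volume Ω = ENNReal.ofReal M →
      (¬ ∃ v, Ω = (fun z => z + v) '' B) →
      (Z + μ0 - M) * asym B Ω ≤ EE Ω - EE B ∧ 0 < EE Ω - EE B := by
  intro Ω hΩ_per hΩ hΩ_vol h_not_ball
  have hrM : 0 < rM := by
    rw [← nonempty_ball (x := (0 : EuclideanSpace ℝ (Fin 3))), ← hB]
    exact nonempty_of_measure_ne_zero (hBvol ▸ (ENNReal.ofReal_pos.2 hM).ne')
  have h_vol : volume Ω = volume (ball (0 : EuclideanSpace ℝ (Fin 3)) rM) := by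
    rw [hΩ_vol, ← hBvol, hB]
  obtain ⟨h_per, h_per_eq⟩ := hQI Ω hΩ_per hΩ hΩ_vol
  have h_per_lt : μ0 * asym B Ω < Per Ω - Per B :=
    h_per.lt_of_ne fun h => h_not_ball (h_per_eq.1 h.symm)
  have h_coul := hCoul Ω hΩ_per hΩ hΩ_vol
  have h_pot : ∀ s : Set (EuclideanSpace ℝ (Fin 3)),
      ∫ x in s, Z / ‖x‖ = Z * ∫ x in s, ‖x‖⁻¹ := fun s => by
    simp_rw [div_eq_mul_inv, integral_const_mul]
  subst hB
  have h_asym_pot := mul_le_mul_of_nonneg_left (asym_ball_le hrM hΩ h_vol) hZ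
  have h_gain := mul_nonneg (sub_nonneg.2 hMlt.le) (asym_ball_nonneg hrM hΩ h_vol)
  rw [hEE, hEE, h_pot, h_pot]
  constructor <;> linarith

/-- Liquid-drop energy with atomic potential: if the quantitative isoperimetric-type
inequality `Per(Ω) − Per(B) ≥ μ₀ γ(Ω)` (with equality iff `Ω` is a translate of `B`)
and the Coulomb estimate `D(𝟙_B,𝟙_B) − D(𝟙_Ω,𝟙_Ω) ≤ M γ(Ω)` hold, then for
`V(x) = Z/|x|`, `Z ≥ 0`, and `M < Z + μ₀`, the energy
`E(Ω) = Per(Ω) − ∫_Ω V + D(𝟙_Ω,𝟙_Ω)` satisfies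
`E(Ω) − E(B) ≥ (Z + μ₀ − M) γ(Ω) > 0` for every finite-perimeter `Ω` of volume `M`
that is not a translate of `B`; in particular the ball `B` uniquely minimizes `E`. -/
theorem stmt19 (Z M μ0 rM : ℝ) (hZ : 0 ≤ Z) (hμ0 : 0 < μ0) (hM : 0 < M)
    (hMlt : M < Z + μ0)
    (B : Set (EuclideanSpace ℝ (Fin 3)))
    (hB : B = Metric.ball 0 rM) (hBvol : volume B = ENNReal.ofReal M)
    (FinPer : Set (EuclideanSpace ℝ (Fin 3)) → Prop)
    (Per : Set (EuclideanSpace ℝ (Fin 3)) → ℝ)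
    (hBFin : FinPer B)
    (hQI : ∀ Ω, FinPer Ω → MeasurableSet Ω → volume Ω = ENNReal.ofReal M →
      μ0 * asym B Ω ≤ Per Ω - Per B ∧
        (Per Ω - Per B = μ0 * asym B Ω ↔ ∃ v, Ω = (fun z => z + v) '' B))
    (hCoul : ∀ Ω, FinPer Ω → MeasurableSet Ω → volume Ω = ENNReal.ofReal M →
      Dr (B.indicator fun _ => 1) (B.indicator fun _ => 1) -
          Dr (Ω.indicator fun _ => 1) (Ω.indicator fun _ => 1) ≤ M * asym B Ω)
    (EE : Set (EuclideanSpace ℝ (Fin 3)) → ℝ)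
    (hEE : ∀ Ω, EE Ω = Per Ω - (∫ x in Ω, Z / ‖x‖) +
      Dr (Ω.indicator fun _ => 1) (Ω.indicator fun _ => 1)) :
    ∀ Ω, FinPer Ω → MeasurableSet Ω → volume Ω = ENNReal.ofReal M →
      (¬ ∃ v, Ω = (fun z => z + v) '' B) →
      (Z + μ0 - M) * asym B Ω ≤ EE Ω - EE B ∧ 0 < EE Ω - EE B :=
  stmt19_general Z M μ0 rM hZ hM hMlt B hB hBvol FinPer Per hQI hCoul EE hEE
end
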